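/- arXiv:1707.03015 — 7 statements merged into one kernel-verified Lean document; each statement's English description precedes it below -/
import Mathlib

section
/- Left-factor part of the Shiota-type factorization theorem (Theorem 1 / Theorem 4 of the paper): Let F, Q, P, P̃ : ℝ → 𝔸 be curves in a unital normed algebra 𝔸, with F and Q differentiable and F(t) invertible for every t. If the factorized operator evolution equations F'(t) = F(t)·P(t) − P̃(t)·F(t) and Q'(t) = Q(t)·P(t) − P̃(t)·Q(t) hold for all t ∈ ℝ, then the curve l(t) := F(t)⁻¹·Q(t) is differentiable and satisfies the Lax-type flow l'(t) = l(t)·P(t) − P(t)·l(t) = [l(t), P(t)] for all t ∈ ℝ. -/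
/-!
Differentiating `l = F⁻¹ Q` by the product rule with `(F⁻¹)' = -F⁻¹ F' F⁻¹` gives
`l' = -F⁻¹ (F P - P̃ F) F⁻¹ Q + F⁻¹ (Q P - P̃ Q) = l P - P l`: the `P̃` terms cancel.
The algebra is not assumed complete, so points near `F t` need not be invertible; the derivative
of inversion is therefore taken within the set of units, where the resolvent identity
`y⁻¹ - x⁻¹ = y⁻¹ (x - y) x⁻¹` first bounds `‖y⁻¹‖` near `x` and then yields the estimate.
-/

open Filter Topology ContinuousLinearMap
open scoped Ring

section NormedRing

variable {R : Type*} [NormedRing R]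

theorem norm_ringInverse_le_two_mul {x y : R} (hx : IsUnit x) (hy : IsUnit y)
    (hxy : ‖y - x‖ * ‖x⁻¹ʳ‖ ≤ 1 / 2) : ‖y⁻¹ʳ‖ ≤ 2 * ‖x⁻¹ʳ‖ := by
  have hdecomp : y⁻¹ʳ = x⁻¹ʳ + y⁻¹ʳ * (x - y) * x⁻¹ʳ := by
    rw [← Ring.inverse_sub_inverse (iff_of_true hy hx), add_sub_cancel]
  have hle : ‖y⁻¹ʳ‖ ≤ ‖x⁻¹ʳ‖ + ‖y⁻¹ʳ‖ * (‖y - x‖ * ‖x⁻¹ʳ‖) :=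
    calc ‖y⁻¹ʳ‖ = ‖x⁻¹ʳ + y⁻¹ʳ * (x - y) * x⁻¹ʳ‖ := congrArg _ hdecomp
      _ ≤ ‖x⁻¹ʳ‖ + ‖y⁻¹ʳ‖ * ‖x - y‖ * ‖x⁻¹ʳ‖ :=
          (norm_add_le _ _).trans (by gcongr; exact norm_mul₃_le)
      _ = ‖x⁻¹ʳ‖ + ‖y⁻¹ʳ‖ * (‖y - x‖ * ‖x⁻¹ʳ‖) := by rw [norm_sub_rev, mul_assoc]
  nlinarith [norm_nonneg y⁻¹ʳ]

theorem norm_ringInverse_sub_ringInverse_le {x y : R} (hx : IsUnit x) (hy : IsUnit y)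
    (hxy : ‖y - x‖ * ‖x⁻¹ʳ‖ ≤ 1 / 2) : ‖y⁻¹ʳ - x⁻¹ʳ‖ ≤ 2 * ‖x⁻¹ʳ‖ ^ 2 * ‖y - x‖ :=
  calc ‖y⁻¹ʳ - x⁻¹ʳ‖ = ‖y⁻¹ʳ * (x - y) * x⁻¹ʳ‖ := by
        rw [Ring.inverse_sub_inverse (iff_of_true hy hx)]
    _ ≤ ‖y⁻¹ʳ‖ * ‖x - y‖ * ‖x⁻¹ʳ‖ := norm_mul₃_le
    _ ≤ 2 * ‖x⁻¹ʳ‖ * ‖x - y‖ * ‖x⁻¹ʳ‖ := by gcongr; exact norm_ringInverse_le_two_mul hx hy hxy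
    _ = 2 * ‖x⁻¹ʳ‖ ^ 2 * ‖y - x‖ := by rw [norm_sub_rev]; ring

theorem continuousWithinAt_ringInverse {x : R} (hx : IsUnit x) :
    ContinuousWithinAt Ring.inverse {y : R | IsUnit y} x := by
  have hclose : ∀ᶠ y in 𝓝[{y : R | IsUnit y}] x, ‖y - x‖ * ‖x⁻¹ʳ‖ ≤ 1 / 2 := by
    have : Tendsto (fun y => ‖y - x‖ * ‖x⁻¹ʳ‖) (𝓝 x) (𝓝 0) := by
      simpa using (tendsto_norm_sub_self x).mul_const ‖x⁻¹ʳ‖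
    exact nhdsWithin_le_nhds (this.eventually_le_const (by norm_num))
  have hbound : Tendsto (fun y => 2 * ‖x⁻¹ʳ‖ ^ 2 * ‖y - x‖) (𝓝[{y : R | IsUnit y}] x) (𝓝 0) := by
    refine tendsto_nhdsWithin_of_tendsto_nhds ?_
    simpa using (tendsto_norm_sub_self x).const_mul (2 * ‖x⁻¹ʳ‖ ^ 2)
  refine tendsto_iff_norm_sub_tendsto_zero.mpr
    (squeeze_zero' (Eventually.of_forall fun _ => norm_nonneg _) ?_ hbound)
  filter_upwards [hclose, self_mem_nhdsWithin] with y hy hyu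
  exact norm_ringInverse_sub_ringInverse_le hx hyu hy

end NormedRing

section NormedAlgebra

variable {𝕜 R : Type*} [NontriviallyNormedField 𝕜] [NormedRing R] [NormedAlgebra 𝕜 R]

theorem hasFDerivWithinAt_ringInverse {x : R} (hx : IsUnit x) :
    HasFDerivWithinAt Ring.inverse (-mulLeftRight 𝕜 R x⁻¹ʳ x⁻¹ʳ) {y : R | IsUnit y} x := by
  refine HasFDerivWithinAt.of_isLittleO (Asymptotics.IsLittleO.of_bound fun c hc => ?_)
  have hsmall : Tendsto (fun y => ‖y⁻¹ʳ - x⁻¹ʳ‖ * ‖x⁻¹ʳ‖) (𝓝[{y : R | IsUnit y}] x) (𝓝 0) := by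
    simpa using ((continuousWithinAt_ringInverse hx).tendsto.sub_const x⁻¹ʳ).norm.mul_const _
  filter_upwards [hsmall.eventually_le_const hc, self_mem_nhdsWithin] with y hy hyu
  have hremainder : y⁻¹ʳ - x⁻¹ʳ - (-mulLeftRight 𝕜 R x⁻¹ʳ x⁻¹ʳ) (y - x) =
      (x⁻¹ʳ - y⁻¹ʳ) * (y - x) * x⁻¹ʳ := by
    rw [neg_apply, mulLeftRight_apply, Ring.inverse_sub_inverse (iff_of_true hyu hx)]
    noncomm_ring
  calc ‖y⁻¹ʳ - x⁻¹ʳ - (-mulLeftRight 𝕜 R x⁻¹ʳ x⁻¹ʳ) (y - x)‖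
        = ‖(x⁻¹ʳ - y⁻¹ʳ) * (y - x) * x⁻¹ʳ‖ := by rw [hremainder]
    _ ≤ ‖x⁻¹ʳ - y⁻¹ʳ‖ * ‖y - x‖ * ‖x⁻¹ʳ‖ := norm_mul₃_le
    _ = ‖y⁻¹ʳ - x⁻¹ʳ‖ * ‖x⁻¹ʳ‖ * ‖y - x‖ := by rw [norm_sub_rev]; ring
    _ ≤ c * ‖y - x‖ := by gcongr

theorem HasDerivAt.ringInverse {f : 𝕜 → R} {f' : R} {t : 𝕜} (hf : HasDerivAt f f' t)
    (hfu : ∀ᶠ s in 𝓝 t, IsUnit (f s)) :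
    HasDerivAt (fun s => (f s)⁻¹ʳ) (-((f t)⁻¹ʳ * f' * (f t)⁻¹ʳ)) t := by
  have h := (hasFDerivWithinAt_ringInverse (𝕜 := 𝕜) hfu.self_of_nhds).comp_hasDerivAt t hf hfu
  rwa [neg_apply, mulLeftRight_apply] at h

end NormedAlgebra

/-- Left-factor part of the Shiota-type factorization theorem:
if `F' = F·P − Pt·F` and `Q' = Q·P − Pt·Q` with `F` unit-valued (here `Pt` plays
the role of `P̃ = ∇γ(l̃)₊`), then `l := F⁻¹·Q` satisfies the Lax-type flow
`l' = l·P − P·l = [l, P]`. -/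
theorem shiota_factorization_left
    {𝔸 : Type*} [NormedRing 𝔸] [NormedAlgebra ℝ 𝔸]
    (F Q P Pt F' Q' : ℝ → 𝔸)
    (hF : ∀ t : ℝ, HasDerivAt F (F' t) t)
    (hQ : ∀ t : ℝ, HasDerivAt Q (Q' t) t)
    (hFu : ∀ t : ℝ, IsUnit (F t))
    (hF' : ∀ t : ℝ, F' t = F t * P t - Pt t * F t)
    (hQ' : ∀ t : ℝ, Q' t = Q t * P t - Pt t * Q t) :
    ∀ t : ℝ, HasDerivAt (fun s : ℝ => Ring.inverse (F s) * Q s)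
      ((Ring.inverse (F t) * Q t) * P t - P t * (Ring.inverse (F t) * Q t)) t := by
  intro t
  set g := (F t)⁻¹ʳ
  have hgF : g * F t = 1 := Ring.inverse_mul_cancel _ (hFu t)
  have hFg : F t * g = 1 := Ring.mul_inverse_cancel _ (hFu t)
  have hconj : g * F' t * g = P t * g - g * Pt t := by
    rw [hF' t, mul_sub, sub_mul, ← mul_assoc, hgF, one_mul, mul_assoc, mul_assoc, hFg, mul_one]
  have hl := ((hF t).ringInverse (Eventually.of_forall hFu)).mul (hQ t)
  rw [hconj, hQ' t] at hl
  exact hl.congr_deriv (by noncomm_ring)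
end

section
/- Right-factor part of the Shiota-type factorization theorem (Theorem 1 / Theorem 4 of the paper): Let F, Q, P, P̃ : ℝ → 𝔸 be curves in a unital normed algebra 𝔸, with F and Q differentiable and F(t) invertible for every t. If F'(t) = F(t)·P(t) − P̃(t)·F(t) and Q'(t) = Q(t)·P(t) − P̃(t)·Q(t) hold for all t ∈ ℝ, then the curve l̃(t) := Q(t)·F(t)⁻¹ is differentiable and satisfies the Lax-type flow l̃'(t) = l̃(t)·P̃(t) − P̃(t)·l̃(t) = [l̃(t), P̃(t)] for all t ∈ ℝ. -/
/-!
Inversion is differentiable along a unit-valued differentiable curve even when `𝔸` is not complete: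
the identity `G s - G t = G s * (F t - F s) * G t` for `G = F⁻¹` first bounds `G` near `t`, giving
continuity, and then identifies the slope of `G` with `-(G s * slope F t s * G t)`, giving
`G' = -G F' G`. With this, the product rule for `Q * G` and the two flow equations leave only a
ring identity, in which the `P`-terms cancel.
-/

open Filter Topology
open scoped Ring

section NormedRing

variable {R : Type*} [NormedRing R]

theorem Filter.Tendsto.ringInverse_of_eventually_isUnit {α : Type*} {l : Filter α} {F : α → R}
    {a : R} (hF : Tendsto F l (𝓝 a)) (ha : IsUnit a) (hu : ∀ᶠ s in l, IsUnit (F s)) :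
    Tendsto (fun s => (F s)⁻¹ʳ) l (𝓝 a⁻¹ʳ) := by
  set c := ‖a⁻¹ʳ‖
  have hsmall : Tendsto (fun s => ‖F s - a‖) l (𝓝 0) := tendsto_iff_norm_sub_tendsto_zero.mp hF
  have hhalf : ∀ᶠ s in l, ‖F s - a‖ * c < 1 / 2 :=
    (hsmall.mul_const c).eventually_lt_const (by norm_num)
  have hbound : ∀ᶠ s in l, ‖(F s)⁻¹ʳ - a⁻¹ʳ‖ ≤ 2 * c ^ 2 * ‖F s - a‖ := by
    filter_upwards [hu, hhalf] with s hs hsc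
    have hdiff : ‖(F s)⁻¹ʳ - a⁻¹ʳ‖ ≤ ‖(F s)⁻¹ʳ‖ * (‖F s - a‖ * c) := by
      rw [Ring.inverse_sub_inverse (iff_of_true hs ha), ← norm_sub_rev a, ← mul_assoc]
      exact (norm_mul_le _ _).trans (by gcongr; exact norm_mul_le _ _)
    -- `‖(F s)⁻¹ʳ‖ ≤ c + ‖(F s)⁻¹ʳ - a⁻¹ʳ‖ ≤ c + ‖(F s)⁻¹ʳ‖ / 2` by `hdiff` and `hsc`.
    have hinv : ‖(F s)⁻¹ʳ‖ ≤ 2 * c := by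
      have := norm_le_norm_add_norm_sub' (F s)⁻¹ʳ a⁻¹ʳ
      nlinarith [norm_nonneg (F s)⁻¹ʳ]
    calc ‖(F s)⁻¹ʳ - a⁻¹ʳ‖ ≤ 2 * c * (‖F s - a‖ * c) := hdiff.trans (by gcongr)
      _ = 2 * c ^ 2 * ‖F s - a‖ := by ring
  refine tendsto_iff_norm_sub_tendsto_zero.mpr (squeeze_zero' (.of_forall fun _ => norm_nonneg _)
    hbound ?_)
  simpa using hsmall.const_mul (2 * c ^ 2)

theorem HasDerivAt.ringInverse_of_eventually_isUnit {𝕜 : Type*} [NontriviallyNormedField 𝕜]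
    [NormedAlgebra 𝕜 R] {F : 𝕜 → R} {F' : R} {t : 𝕜} (hF : HasDerivAt F F' t)
    (hu : ∀ᶠ s in 𝓝 t, IsUnit (F s)) :
    HasDerivAt (fun s => (F s)⁻¹ʳ) (-((F t)⁻¹ʳ * F' * (F t)⁻¹ʳ)) t := by
  have hG : Tendsto (fun s => (F s)⁻¹ʳ) (𝓝[≠] t) (𝓝 (F t)⁻¹ʳ) :=
    (hF.continuousAt.tendsto.ringInverse_of_eventually_isUnit hu.self_of_nhds hu).mono_left
      nhdsWithin_le_nhds
  rw [hasDerivAt_iff_tendsto_slope]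
  refine ((hG.mul (hasDerivAt_iff_tendsto_slope.mp hF)).mul_const (F t)⁻¹ʳ).neg.congr' ?_
  filter_upwards [nhdsWithin_le_nhds hu] with s hs
  rw [slope_def_module, slope_def_module, mul_smul_comm, smul_mul_assoc, ← smul_neg,
    Ring.inverse_sub_inverse (iff_of_true hs hu.self_of_nhds)]
  congr 1
  noncomm_ring

end NormedRing

theorem lax_mul_ringInverse {R : Type*} [Ring R] {a q p p' : R} (ha : IsUnit a) :
    (q * p - p' * q) * a⁻¹ʳ + q * -(a⁻¹ʳ * (a * p - p' * a) * a⁻¹ʳ) =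
      q * a⁻¹ʳ * p' - p' * (q * a⁻¹ʳ) := by
  have hla : a⁻¹ʳ * a = 1 := Ring.inverse_mul_cancel a ha
  have hra : a * a⁻¹ʳ = 1 := Ring.mul_inverse_cancel a ha
  calc (q * p - p' * q) * a⁻¹ʳ + q * -(a⁻¹ʳ * (a * p - p' * a) * a⁻¹ʳ)
      = q * p * a⁻¹ʳ - p' * q * a⁻¹ʳ - q * (a⁻¹ʳ * a) * p * a⁻¹ʳ
          + q * a⁻¹ʳ * p' * (a * a⁻¹ʳ) := by noncomm_ring
    _ = q * a⁻¹ʳ * p' - p' * (q * a⁻¹ʳ) := by rw [hla, hra]; noncomm_ring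

/-- Right-factor part of the Shiota-type factorization theorem:
if `F' = F·P − Pt·F` and `Q' = Q·P − Pt·Q` with `F` unit-valued (here `Pt` plays
the role of `P̃ = ∇γ(l̃)₊`), then `l̃ := Q·F⁻¹` satisfies the Lax-type flow
`l̃' = l̃·Pt − Pt·l̃ = [l̃, Pt]`. -/
theorem shiota_factorization_right
    {𝔸 : Type*} [NormedRing 𝔸] [NormedAlgebra ℝ 𝔸]
    (F Q P Pt F' Q' : ℝ → 𝔸)
    (hF : ∀ t : ℝ, HasDerivAt F (F' t) t)
    (hQ : ∀ t : ℝ, HasDerivAt Q (Q' t) t)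
    (hFu : ∀ t : ℝ, IsUnit (F t))
    (hF' : ∀ t : ℝ, F' t = F t * P t - Pt t * F t)
    (hQ' : ∀ t : ℝ, Q' t = Q t * P t - Pt t * Q t) :
    ∀ t : ℝ, HasDerivAt (fun s : ℝ => Q s * Ring.inverse (F s))
      ((Q t * Ring.inverse (F t)) * Pt t - Pt t * (Q t * Ring.inverse (F t))) t := by
  intro t
  have hprod := (hQ t).mul ((hF t).ringInverse_of_eventually_isUnit (.of_forall hFu))
  rw [hF', hQ', lax_mul_ringInverse (hFu t)] at hprod
  exact hprod
end

section
/- Forward direction of Proposition 2 / Proposition 5 of the paper: Let P, P̃ : ℝ → 𝔸 be curves in a unital normed algebra 𝔸 and let Φ, Ψ : ℝ → 𝔸 be differentiable curves with Φ unit-valued, satisfying the linear evolution equations Ψ'(t) = −P̃(t)·Ψ(t) and Φ'(t) = −P(t)·Φ(t) for all t ∈ ℝ. Then for any fixed element X̄ ∈ 𝔸 (constant in t), the curve X(t) := Ψ(t)·X̄·Φ(t)⁻¹ is differentiable and satisfies the factorized evolution equation X'(t) = X(t)·P(t) − P̃(t)·X(t) for all t ∈ ℝ. In particular this applies to X̄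 = F̄ₙ and X̄ = Q̄ₙ₊ₚ, yielding the representations Fₙ = Ψ F̄ₙ Φ⁻¹ and Qₙ₊ₚ = Ψ Q̄ₙ₊ₚ Φ⁻¹ of solutions of the factorized Lax-type flows. -/
/-!
The inverse of a unit-valued differentiable curve is differentiable with
`(Φ⁻¹)' = -Φ⁻¹ Φ' Φ⁻¹`, even when the algebra is not complete: the resolvent-type identity
`x⁻¹ - a⁻¹ = x⁻¹ (a - x) a⁻¹` first bounds `x⁻¹` near `a` and so gives continuity of inversion
on units, and then turns the slope of `Φ⁻¹` into `-Φ(s)⁻¹ · slope Φ · Φ(t)⁻¹`.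
With `Φ' = -PΦ` this reads `(Φ⁻¹)' = Φ⁻¹P`, and the product rule applied to `Ψ X̄ Φ⁻¹` gives
`-P̃ X + X P`.
-/

open Filter Topology

namespace NormedRing

variable {R : Type*} [NormedRing R]

theorem norm_inverse_sub_inverse_le {x a : R} (hx : IsUnit x) (ha : IsUnit a)
    (hclose : ‖x - a‖ * ‖Ring.inverse a‖ ≤ 1 / 2) :
    ‖Ring.inverse x - Ring.inverse a‖ ≤ 2 * ‖Ring.inverse a‖ ^ 2 * ‖x - a‖ := by
  have hdiff :
      ‖Ring.inverse x - Ring.inverse a‖ ≤ ‖Ring.inverse x‖ * (‖x - a‖ * ‖Ring.inverse a‖) := by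
    rw [Ring.inverse_sub_inverse (iff_of_true hx ha), ← norm_neg (x - a), neg_sub, ← mul_assoc]
    exact (norm_mul_le _ _).trans (mul_le_mul_of_nonneg_right (norm_mul_le _ _) (norm_nonneg _))
  have hbound : ‖Ring.inverse x‖ ≤ 2 * ‖Ring.inverse a‖ := by
    have := norm_le_norm_add_norm_sub' (Ring.inverse x) (Ring.inverse a)
    nlinarith [norm_nonneg (Ring.inverse x)]
  calc ‖Ring.inverse x - Ring.inverse a‖
      ≤ ‖Ring.inverse x‖ * (‖x - a‖ * ‖Ring.inverse a‖) := hdiff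
    _ ≤ 2 * ‖Ring.inverse a‖ * (‖x - a‖ * ‖Ring.inverse a‖) := by gcongr
    _ = 2 * ‖Ring.inverse a‖ ^ 2 * ‖x - a‖ := by ring

theorem continuousOn_inverse : ContinuousOn (Ring.inverse : R → R) {x | IsUnit x} := by
  intro a ha
  rw [ContinuousWithinAt, tendsto_iff_norm_sub_tendsto_zero]
  have hdist : Tendsto (fun x => ‖x - a‖) (𝓝[{x | IsUnit x}] a) (𝓝 0) :=
    tendsto_iff_norm_sub_tendsto_zero.1 (tendsto_id.mono_left nhdsWithin_le_nhds)
  have hclose : ∀ᶠ x in 𝓝[{x | IsUnit x}] a, ‖x - a‖ * ‖Ring.inverse a‖ ≤ 1 / 2 := by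
    have := hdist.mul_const ‖Ring.inverse a‖
    rw [zero_mul] at this
    exact this.eventually (eventually_le_nhds one_half_pos)
  have hbound : Tendsto (fun x => 2 * ‖Ring.inverse a‖ ^ 2 * ‖x - a‖)
      (𝓝[{x | IsUnit x}] a) (𝓝 0) := by
    simpa using hdist.const_mul (2 * ‖Ring.inverse a‖ ^ 2)
  refine squeeze_zero' (Eventually.of_forall fun _ => norm_nonneg _) ?_ hbound
  filter_upwards [hclose, self_mem_nhdsWithin] with x hx hxu
  exact norm_inverse_sub_inverse_le hxu ha hx

end NormedRing

theorem HasDerivAt.ringInverse_s2 {𝕜 R : Type*} [NontriviallyNormedField 𝕜] [NormedRing R]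
    [NormedAlgebra 𝕜 R] {Φ : 𝕜 → R} {D : R} {t : 𝕜} (hΦ : HasDerivAt Φ D t)
    (hunit : ∀ᶠ s in 𝓝 t, IsUnit (Φ s)) :
    HasDerivAt (fun s => Ring.inverse (Φ s))
      (-(Ring.inverse (Φ t) * D * Ring.inverse (Φ t))) t := by
  have hunit_t : IsUnit (Φ t) := hunit.self_of_nhds
  have hinv_cont : Tendsto (fun s => Ring.inverse (Φ s)) (𝓝[≠] t) (𝓝 (Ring.inverse (Φ t))) :=
    (NormedRing.continuousOn_inverse.continuousWithinAt hunit_t |>.tendsto.comp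
      (tendsto_nhdsWithin_iff.2 ⟨hΦ.continuousAt.tendsto, hunit⟩)).mono_left
      nhdsWithin_le_nhds
  have hslope : ∀ᶠ s in 𝓝[≠] t, Ring.inverse (Φ s) * -slope Φ t s * Ring.inverse (Φ t)
      = slope (fun s => Ring.inverse (Φ s)) t s := by
    filter_upwards [nhdsWithin_le_nhds hunit] with s hs
    rw [slope_def_module, slope_def_module,
      Ring.inverse_sub_inverse (iff_of_true hs hunit_t), ← neg_sub (Φ s) (Φ t)]
    simp only [mul_neg, neg_mul, smul_neg, mul_smul_comm, smul_mul_assoc]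
  rw [hasDerivAt_iff_tendsto_slope] at hΦ ⊢
  simpa only [mul_neg, neg_mul] using
    ((hinv_cont.mul hΦ.neg).mul tendsto_const_nhds).congr' hslope

/-- Forward direction of Proposition 2 / Proposition 5: if `Ψ' = −Pt·Ψ` and
`Φ' = −P·Φ` with `Φ` unit-valued, then for any constant element `Xbar ∈ 𝔸` the
curve `X := Ψ·Xbar·Φ⁻¹` satisfies the factorized evolution equation
`X' = X·P − Pt·X`.  (In particular `Xbar = F̄ₙ, Q̄ₙ₊ₚ` give the representations
`Fₙ = Ψ F̄ₙ Φ⁻¹`, `Qₙ₊ₚ = Ψ Q̄ₙ₊ₚ Φ⁻¹`.) -/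
theorem dressed_constant_solves_factorized_flow
    {𝔸 : Type*} [NormedRing 𝔸] [NormedAlgebra ℝ 𝔸]
    (P Pt Φ Ψ : ℝ → 𝔸)
    (hΦu : ∀ t : ℝ, IsUnit (Φ t))
    (hΨ : ∀ t : ℝ, HasDerivAt Ψ (-(Pt t * Ψ t)) t)
    (hΦ : ∀ t : ℝ, HasDerivAt Φ (-(P t * Φ t)) t)
    (Xbar : 𝔸) :
    ∀ t : ℝ, HasDerivAt (fun s : ℝ => Ψ s * Xbar * Ring.inverse (Φ s))
      ((Ψ t * Xbar * Ring.inverse (Φ t)) * P t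
        - Pt t * (Ψ t * Xbar * Ring.inverse (Φ t))) t := by
  intro t
  have hinv : HasDerivAt (fun s => Ring.inverse (Φ s)) (Ring.inverse (Φ t) * P t) t := by
    convert (hΦ t).ringInverse_s2 (.of_forall hΦu) using 1
    rw [mul_neg, neg_mul, neg_neg, mul_assoc, mul_assoc, Ring.mul_inverse_cancel _ (hΦu t),
      mul_one]
  refine (((hΨ t).mul_const Xbar).mul hinv).congr_deriv ?_
  noncomm_ring
end

section
/- Converse direction of Proposition 2 / Proposition 5 of the paper (constancy of the dressed factor): Let P, P̃ : ℝ → 𝔸 be curves in a unital normed algebra 𝔸, let X : ℝ → 𝔸 be differentiable with X'(t) = X(t)·P(t) − P̃(t)·X(t) for all t, and let Φ, Ψ : ℝ → 𝔸 be differentiable unit-valued curves with Φ'(t) = −P(t)·Φ(t) and Ψ'(t) = −P̃(t)·Ψ(t) for all t. Then the curve t ↦ Ψ(t)⁻¹·X(t)·Φ(t) has derivative zero at every t ∈ ℝ, hence is constant: Ψ(t)⁻¹·X(t)·Φ(t) = Ψ(0)⁻¹·X(0)·Φ(0) for all t ∈ ℝ. -/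
/-!
From `Ψ' = -P̃Ψ` one gets `(Ψ⁻¹)' = -Ψ⁻¹Ψ'Ψ⁻¹ = Ψ⁻¹P̃`, so by the product rule
`(Ψ⁻¹XΦ)' = Ψ⁻¹(P̃X + X' - XP)Φ = 0`, and a curve with zero derivative is constant.
Since `𝔸` need not be complete, the derivative of `t ↦ Ψ(t)⁻¹` is computed from slopes via
`Ψ(s)⁻¹ - Ψ(t)⁻¹ = Ψ(s)⁻¹(Ψ(t) - Ψ(s))Ψ(t)⁻¹`, and the continuity of the inverse this needs
is transported from the completion of `𝔸`.
-/

open Filter Topology UniformSpace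
open scoped Ring

theorem map_ringInverse_of_isUnit {F M N : Type*} [MonoidWithZero M] [MonoidWithZero N]
    [FunLike F M N] [MonoidHomClass F M N] (f : F) {x : M} (hx : IsUnit x) :
    f x⁻¹ʳ = (f x)⁻¹ʳ := by
  obtain ⟨u, rfl⟩ := hx
  change f (u : M)⁻¹ʳ = ((Units.map (f : M →* N) u : N))⁻¹ʳ
  rw [Ring.inverse_unit, Ring.inverse_unit]
  rfl

section NormedRing

variable {R : Type*} [NormedRing R]

theorem ContinuousAt.ring_inverse {α : Type*} [TopologicalSpace α] {f : α → R} {a : α}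
    (hf : ContinuousAt f a) (hu : ∀ᶠ x in 𝓝 a, IsUnit (f x)) :
    ContinuousAt (fun x => (f x)⁻¹ʳ) a := by
  let ι : R →+* Completion R := Completion.coeRingHom
  obtain ⟨u, hua⟩ := hu.self_of_nhds
  rw [(Completion.coe_isometry (α := R)).isUniformInducing.isInducing.continuousAt_iff]
  refine ContinuousAt.congr ?_ (hu.mono fun x hx => (map_ringInverse_of_isUnit ι hx).symm)
  refine (NormedRing.inverse_continuousAt (Units.map ι.toMonoidHom u)).comp_of_eq
    ((Completion.continuous_coe R).continuousAt.comp hf) ?_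
  simp [hua, ι]

theorem HasDerivAt.ring_inverse {𝕜 : Type*} [NontriviallyNormedField 𝕜] [NormedAlgebra 𝕜 R]
    {f : 𝕜 → R} {f' : R} {x : 𝕜} (hf : HasDerivAt f f' x) (hu : ∀ᶠ y in 𝓝 x, IsUnit (f y)) :
    HasDerivAt (fun y => (f y)⁻¹ʳ) (-((f x)⁻¹ʳ * f' * (f x)⁻¹ʳ)) x := by
  have hcont := hf.continuousAt.ring_inverse hu
  rw [hasDerivAt_iff_tendsto_slope] at hf ⊢
  have hslope : ∀ᶠ y in 𝓝[≠] x,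
      -((f y)⁻¹ʳ * slope f x y * (f x)⁻¹ʳ) = slope (fun y => (f y)⁻¹ʳ) x y := by
    filter_upwards [nhdsWithin_le_nhds hu] with y hy
    rw [slope_def_module, slope_def_module,
      Ring.inverse_sub_inverse ⟨fun _ => hu.self_of_nhds, fun _ => hy⟩, ← neg_sub (f x),
      mul_smul_comm, smul_mul_assoc, mul_neg, neg_mul, smul_neg, neg_neg]
  refine Tendsto.congr' hslope (Tendsto.neg (Tendsto.mul_const _ (Tendsto.mul ?_ hf)))
  exact hcont.tendsto.mono_left nhdsWithin_le_nhds

end NormedRing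

theorem dressed_factor_is_constant_general
    {𝔸 : Type*} [NormedRing 𝔸] [NormedAlgebra ℝ 𝔸]
    (P Pt X Φ Ψ : ℝ → 𝔸) (X' : ℝ → 𝔸)
    (hX : ∀ t : ℝ, HasDerivAt X (X' t) t)
    (hX' : ∀ t : ℝ, X' t = X t * P t - Pt t * X t)
    (hΨu : ∀ t : ℝ, IsUnit (Ψ t))
    (hΦ : ∀ t : ℝ, HasDerivAt Φ (-(P t * Φ t)) t)
    (hΨ : ∀ t : ℝ, HasDerivAt Ψ (-(Pt t * Ψ t)) t) :
    (∀ t : ℝ, HasDerivAt (fun s : ℝ => Ring.inverse (Ψ s) * X s * Φ s) 0 t) ∧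
    (∀ t : ℝ, Ring.inverse (Ψ t) * X t * Φ t
        = Ring.inverse (Ψ 0) * X 0 * Φ 0) := by
  have hderiv (t : ℝ) : HasDerivAt (fun s => (Ψ s)⁻¹ʳ * X s * Φ s) 0 t := by
    refine ((((hΨ t).ring_inverse (.of_forall hΨu)).mul (hX t)).mul (hΦ t)).congr_deriv ?_
    have hcancel : Ψ t * (Ψ t)⁻¹ʳ = 1 := Ring.mul_inverse_cancel _ (hΨu t)
    calc _ = (Ψ t)⁻¹ʳ * Pt t * (Ψ t * (Ψ t)⁻¹ʳ - 1) * X t * Φ t := by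
          rw [hX' t, Pi.mul_apply]; noncomm_ring
      _ = 0 := by rw [hcancel, sub_self, mul_zero, zero_mul, zero_mul]
  exact ⟨hderiv, fun t => is_const_of_deriv_eq_zero (fun s => (hderiv s).differentiableAt)
    (fun s => (hderiv s).deriv) t 0⟩

/-- Converse direction of Proposition 2 / Proposition 5 (constancy of the
dressed factor): if `X' = X·P − Pt·X`, `Φ' = −P·Φ` and `Ψ' = −Pt·Ψ` with `Φ, Ψ`
unit-valued, then `t ↦ Ψ(t)⁻¹·X(t)·Φ(t)` has zero derivative everywhere, hence
is constant. -/
theorem dressed_factor_is_constant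
    {𝔸 : Type*} [NormedRing 𝔸] [NormedAlgebra ℝ 𝔸]
    (P Pt X Φ Ψ : ℝ → 𝔸) (X' : ℝ → 𝔸)
    (hX : ∀ t : ℝ, HasDerivAt X (X' t) t)
    (hX' : ∀ t : ℝ, X' t = X t * P t - Pt t * X t)
    (hΦu : ∀ t : ℝ, IsUnit (Φ t)) (hΨu : ∀ t : ℝ, IsUnit (Ψ t))
    (hΦ : ∀ t : ℝ, HasDerivAt Φ (-(P t * Φ t)) t)
    (hΨ : ∀ t : ℝ, HasDerivAt Ψ (-(Pt t * Ψ t)) t) :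
    (∀ t : ℝ, HasDerivAt (fun s : ℝ => Ring.inverse (Ψ s) * X s * Φ s) 0 t) ∧
    (∀ t : ℝ, Ring.inverse (Ψ t) * X t * Φ t
        = Ring.inverse (Ψ 0) * X 0 * Φ 0) :=
  dressed_factor_is_constant_general P Pt X Φ Ψ X' hX hX' hΨu hΦ hΨ
end

section
/- Existence part of Proposition 2 of the paper: Let 𝔸 be a unital Banach algebra over ℝ and let A : ℝ → 𝔸 be a continuous curve. Then there exists a differentiable curve Φ : ℝ → 𝔸 with Φ(0) = 1, satisfying the linear evolution equation Φ'(t) = −A(t)·Φ(t) for all t ∈ ℝ, and such that Φ(t) is a unit of 𝔸 for every t ∈ ℝ. -/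
/-!
The fundamental solution is the sum of the Peano–Baker series of `x' = -A x`: its terms obey
factorial bounds on compact intervals, so the series may be differentiated term by term.
Its inverse is the solution `Ψ` of the adjoint equation `Ψ' = Ψ A`, `Ψ 0 = 1`: the product
`Ψ Φ` has derivative zero, while `Φ Ψ` and `1` both solve the linear equation
`Θ' = Θ A - A Θ`, so they agree by uniqueness for Lipschitz ODEs.
-/

open intervalIntegral MeasureTheory Set
open scoped Nat Interval

theorem exists_norm_le_of_continuous {F : Type*} [SeminormedAddCommGroup F] {f : ℝ → F}
    (hf : Continuous f) (r : ℝ) : ∃ M, ∀ s ∈ Icc (-r) r, ‖f s‖ ≤ M := by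
  obtain ⟨M, hM⟩ := isCompact_Icc.bddAbove_image hf.norm.continuousOn
  exact ⟨M, fun s hs => hM (mem_image_of_mem _ hs)⟩

section LinearODE

variable {E : Type*} [NormedAddCommGroup E] [NormedSpace ℝ E] {L : ℝ → E →L[ℝ] E}

theorem linear_ODE_solution_unique (hL : Continuous L) {x y : ℝ → E}
    (hx : ∀ t, HasDerivAt x (L t (x t)) t) (hy : ∀ t, HasDerivAt y (L t (y t)) t)
    (h0 : x 0 = y 0) : x = y := by
  funext t
  set r := |t| + 1
  obtain ⟨M, hM⟩ := exists_norm_le_of_continuous hL r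
  have hlip : ∀ s ∈ Ioo (-r) r, LipschitzOnWith M.toNNReal (L s) univ := fun s hs => by
    have hLs := hM s (Ioo_subset_Icc_self hs)
    exact ((L s).lipschitz.weaken
      ((Real.le_toNNReal_iff_coe_le ((norm_nonneg _).trans hLs)).2 hLs)).lipschitzOnWith
  exact ODE_solution_unique_of_mem_Ioo hlip (abs_lt.1 (by rw [abs_zero]; positivity))
    (fun s _ => ⟨hx s, mem_univ _⟩) (fun s _ => ⟨hy s, mem_univ _⟩) h0 (abs_lt.1 (lt_add_one _))

/-- Terms of the Peano–Baker series of `x' = L t x`, `x 0 = x₀`; their partial sums are the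
Picard iterates. -/
noncomputable def peanoBakerTerm (L : ℝ → E →L[ℝ] E) (x₀ : E) : ℕ → ℝ → E
  | 0 => fun _ => x₀
  | n + 1 => fun t => ∫ s in (0 : ℝ)..t, L s (peanoBakerTerm L x₀ n s)

theorem continuous_peanoBakerTerm (hL : Continuous L) (x₀ : E) :
    ∀ n, Continuous (peanoBakerTerm L x₀ n)
  | 0 => continuous_const
  | n + 1 => continuous_primitive
      (fun _ _ => (hL.clm_apply (continuous_peanoBakerTerm hL x₀ n)).intervalIntegrable _ _) 0

theorem norm_peanoBakerTerm_le {r M : ℝ} (hM : ∀ s ∈ Icc (-r) r, ‖L s‖ ≤ M) (x₀ : E) :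
    ∀ n, ∀ t ∈ Icc (-r) r, ‖peanoBakerTerm L x₀ n t‖ ≤ ‖x₀‖ * ((M * |t|) ^ n / n !)
  | 0, t, _ => by simp [peanoBakerTerm]
  | n + 1, t, ht => by
    have hM0 : 0 ≤ M := (norm_nonneg _).trans (hM t ht)
    have hsub : Ι 0 t ⊆ Icc (-r) r := fun s hs =>
      uIcc_subset_Icc ⟨by linarith [ht.1, ht.2], by linarith [ht.1, ht.2]⟩ ht
        (uIoc_subset_uIcc hs)
    have hterm : ∀ s ∈ Ι 0 t, ‖L s (peanoBakerTerm L x₀ n s)‖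
        ≤ ‖x₀‖ * M ^ (n + 1) / n ! * |s - 0| ^ n := fun s hs =>
      calc ‖L s (peanoBakerTerm L x₀ n s)‖ ≤ ‖L s‖ * ‖peanoBakerTerm L x₀ n s‖ :=
            (L s).le_opNorm _
        _ ≤ M * (‖x₀‖ * ((M * |s|) ^ n / n !)) :=
          mul_le_mul (hM s (hsub hs)) (norm_peanoBakerTerm_le hM x₀ n s (hsub hs))
            (norm_nonneg _) hM0
        _ = ‖x₀‖ * M ^ (n + 1) / n ! * |s - 0| ^ n := by rw [sub_zero]; ring
    calc ‖peanoBakerTerm L x₀ (n + 1) t‖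
        = ‖∫ s in Ι 0 t, L s (peanoBakerTerm L x₀ n s)‖ := norm_integral_eq_norm_integral_uIoc _
      _ ≤ ∫ s in Ι 0 t, ‖x₀‖ * M ^ (n + 1) / n ! * |s - 0| ^ n :=
        norm_integral_le_of_norm_le (by fun_prop : Continuous _).integrableOn_uIoc
          (ae_restrict_of_forall_mem measurableSet_uIoc hterm)
      _ = ‖x₀‖ * ((M * |t|) ^ (n + 1) / (n + 1)!) := by
        rw [MeasureTheory.integral_const_mul, integral_pow_abs_sub_uIoc, sub_zero,
          Nat.factorial_succ, Nat.cast_mul, mul_pow]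
        push_cast
        field_simp

theorem norm_peanoBakerTerm_le_of_mem_Icc {r M : ℝ} (hM : ∀ s ∈ Icc (-r) r, ‖L s‖ ≤ M)
    (x₀ : E) (n : ℕ) {t : ℝ} (ht : t ∈ Icc (-r) r) :
    ‖peanoBakerTerm L x₀ n t‖ ≤ ‖x₀‖ * ((M * r) ^ n / n !) := by
  have hM0 : 0 ≤ M := (norm_nonneg _).trans (hM t ht)
  refine (norm_peanoBakerTerm_le hM x₀ n t ht).trans ?_
  gcongr
  exact abs_le.2 ht

noncomputable def peanoBaker (L : ℝ → E →L[ℝ] E) (x₀ : E) (t : ℝ) : E :=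
  ∑' n, peanoBakerTerm L x₀ n t

theorem peanoBaker_zero (L : ℝ → E →L[ℝ] E) (x₀ : E) : peanoBaker L x₀ 0 = x₀ := by
  refine (tsum_eq_single 0 fun n hn => ?_).trans rfl
  obtain ⟨m, rfl⟩ := Nat.exists_eq_succ_of_ne_zero hn
  exact integral_same

variable [CompleteSpace E]

theorem hasDerivAt_peanoBakerTerm_succ (hL : Continuous L) (x₀ : E) (n : ℕ) (t : ℝ) :
    HasDerivAt (peanoBakerTerm L x₀ (n + 1)) (L t (peanoBakerTerm L x₀ n t)) t :=
  ((hL.clm_apply (continuous_peanoBakerTerm hL x₀ n)).integral_hasStrictDerivAt 0 t).hasDerivAt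

theorem summable_peanoBakerTerm (hL : Continuous L) (x₀ : E) (t : ℝ) :
    Summable fun n => peanoBakerTerm L x₀ n t := by
  obtain ⟨M, hM⟩ := exists_norm_le_of_continuous hL |t|
  exact ((Real.summable_pow_div_factorial _).mul_left _).of_norm_bounded
    fun n => norm_peanoBakerTerm_le_of_mem_Icc hM x₀ n (abs_le.1 le_rfl)

theorem hasDerivAt_peanoBaker (hL : Continuous L) (x₀ : E) (t : ℝ) :
    HasDerivAt (peanoBaker L x₀) (L t (peanoBaker L x₀ t)) t := by
  set r := |t| + 1
  obtain ⟨M, hM⟩ := exists_norm_le_of_continuous hL r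
  have hIcc : ∀ {s}, s ∈ Ioo (-r) r → s ∈ Icc (-r) r := fun hs => Ioo_subset_Icc_self hs
  have ht : t ∈ Ioo (-r) r := abs_lt.1 (lt_add_one _)
  have h0 : (0 : ℝ) ∈ Ioo (-r) r := abs_lt.1 (by rw [abs_zero]; positivity)
  have hM0 : 0 ≤ M := (norm_nonneg _).trans (hM t (hIcc ht))
  -- On `(-r, r)` the derivatives of the terms are dominated by the exponential series of `M * r`.
  have htail : HasDerivAt (fun s => ∑' n, peanoBakerTerm L x₀ (n + 1) s)
      (∑' n, L t (peanoBakerTerm L x₀ n t)) t :=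
    hasDerivAt_tsum_of_isPreconnected
      ((Real.summable_pow_div_factorial (M * r)).mul_left (M * ‖x₀‖))
      isOpen_Ioo isPreconnected_Ioo (fun n s _ => hasDerivAt_peanoBakerTerm_succ hL x₀ n s)
      (fun n s hs => ((L s).le_opNorm _).trans <| by
        rw [mul_assoc]
        exact mul_le_mul (hM s (hIcc hs)) (norm_peanoBakerTerm_le_of_mem_Icc hM x₀ n (hIcc hs))
          (norm_nonneg _) hM0)
      h0 ((summable_nat_add_iff 1).2 (summable_peanoBakerTerm hL x₀ 0)) ht
  have hsplit : peanoBaker L x₀ = fun s => x₀ + ∑' n, peanoBakerTerm L x₀ (n + 1) s :=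
    funext fun s => (summable_peanoBakerTerm hL x₀ s).tsum_eq_zero_add
  have hderiv : L t (peanoBaker L x₀ t) = ∑' n, L t (peanoBakerTerm L x₀ n t) :=
    (L t).map_tsum (summable_peanoBakerTerm hL x₀ t)
  rw [hderiv, hsplit]
  exact htail.const_add x₀

end LinearODE

section BanachAlgebra

variable {𝔸 : Type*} [NormedRing 𝔸] [NormedAlgebra ℝ 𝔸] {A Φ Ψ : ℝ → 𝔸}

theorem mul_eq_mul_zero_of_hasDerivAt (hΦ : ∀ t, HasDerivAt Φ (-(A t * Φ t)) t)
    (hΨ : ∀ t, HasDerivAt Ψ (Ψ t * A t) t) (t : ℝ) : Ψ t * Φ t = Ψ 0 * Φ 0 := by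
  have hderiv : ∀ s, HasDerivAt (Ψ * Φ) 0 s := fun s => by
    convert (hΨ s).mul (hΦ s) using 1
    noncomm_ring
  exact is_const_of_deriv_eq_zero (fun s => (hderiv s).differentiableAt)
    (fun s => (hderiv s).deriv) t 0

theorem mul_eq_one_of_hasDerivAt [CompleteSpace 𝔸] (hA : Continuous A)
    (hΦ : ∀ t, HasDerivAt Φ (-(A t * Φ t)) t) (hΨ : ∀ t, HasDerivAt Ψ (Ψ t * A t) t)
    (h0 : Φ 0 * Ψ 0 = 1) (t : ℝ) : Φ t * Ψ t = 1 := by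
  set L : ℝ → 𝔸 →L[ℝ] 𝔸 :=
    fun s => (ContinuousLinearMap.mul ℝ 𝔸).flip (A s) - ContinuousLinearMap.mul ℝ 𝔸 (A s)
  have hprod : ∀ s, HasDerivAt (Φ * Ψ) (L s ((Φ * Ψ) s)) s := fun s => by
    convert (hΦ s).mul (hΨ s) using 1
    show Φ s * Ψ s * A s - A s * (Φ s * Ψ s) = _
    noncomm_ring
  have hone : ∀ s, HasDerivAt (fun _ => (1 : 𝔸)) (L s 1) s := fun s => by
    simpa [L] using hasDerivAt_const s (1 : 𝔸)
  exact congrFun (linear_ODE_solution_unique (by fun_prop) hprod hone h0) t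

end BanachAlgebra

/-- Existence part of Proposition 2: in a unital real Banach algebra, for any
continuous curve `A : ℝ → 𝔸` there exists a differentiable curve `Φ` with
`Φ(0) = 1`, solving the linear evolution equation `Φ' = −A·Φ`, whose values
are units of `𝔸`. -/
theorem exists_fundamental_solution
    {𝔸 : Type*} [NormedRing 𝔸] [NormedAlgebra ℝ 𝔸] [CompleteSpace 𝔸]
    (A : ℝ → 𝔸) (hA : Continuous A) :
    ∃ Φ : ℝ → 𝔸, Φ 0 = 1 ∧
      (∀ t : ℝ, HasDerivAt Φ (-(A t * Φ t)) t) ∧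
      (∀ t : ℝ, IsUnit (Φ t)) := by
  set Φ := peanoBaker (fun t => -ContinuousLinearMap.mul ℝ 𝔸 (A t)) 1
  set Ψ := peanoBaker (fun t => (ContinuousLinearMap.mul ℝ 𝔸).flip (A t)) 1
  have hΦ : ∀ t, HasDerivAt Φ (-(A t * Φ t)) t := hasDerivAt_peanoBaker (by fun_prop) 1
  have hΨ : ∀ t, HasDerivAt Ψ (Ψ t * A t) t := hasDerivAt_peanoBaker (by fun_prop) 1
  have hΦ0 : Φ 0 = 1 := peanoBaker_zero _ _
  have hΨ0 : Ψ 0 = 1 := peanoBaker_zero _ _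
  refine ⟨Φ, hΦ0, hΦ, fun t => ⟨⟨Φ t, Ψ t, ?_, ?_⟩, rfl⟩⟩
  · exact mul_eq_one_of_hasDerivAt hA hΦ hΨ (by rw [hΦ0, hΨ0, one_mul]) t
  · rw [mul_eq_mul_zero_of_hasDerivAt hΦ hΨ t, hΦ0, hΨ0, one_mul]
end

section
/- Full statement of Proposition 2 / Proposition 5 of the paper: Let 𝔸 be a unital Banach algebra over ℝ, let P, P̃ : ℝ → 𝔸 be continuous curves, and let F, Q : ℝ → 𝔸 be differentiable curves satisfying the factorized evolution equations F'(t) = F(t)·P(t) − P̃(t)·F(t) and Q'(t) = Q(t)·P(t) − P̃(t)·Q(t) for all t ∈ ℝ. Then there exist differentiable unit-valued curves Φ, Ψ : ℝ → 𝔸 with Φ(0) = Ψ(0) = 1, satisfying Φ'(t) = −P(t)·Φ(t) and Ψ'(t) = −P̃(t)·Ψ(t), such that F(t) = Ψ(t)·F(0)·Φ(t)⁻¹ and Q(t) = Ψ(t)·Q(0)·Φ(t)⁻¹ for all t ∈ ℝ; i.e., the elements F̄ = F(0) and Q̄ = Q(0) are constant with respect to the evolution parameter t. -/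
/-!
`Φ' = -PΦ` and `Ψ' = -P̃Ψ`, as well as the right-multiplicative equations `κ' = κP`, are solved
globally by their Dyson series: on `|t| ≤ T` the `n`-th term is bounded by `(M|t|)ⁿ/n!`, where
`M` bounds `‖P‖` there. The product `κΦ` has zero derivative, while `Φκ` and `1` both solve the
linear equation `X' = XP - PX`; uniqueness for linear equations (Grönwall) makes `κ` a two-sided
inverse of `Φ`. In the same way `F` and `t ↦ Ψ(t) F(0) Φ(t)⁻¹` both solve `X' = XP - P̃X` with the
same value at `0`.
-/

open Set Filter MeasureTheory intervalIntegral
open scoped Nat NNReal Interval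

theorem exists_norm_le_of_abs_le {E : Type*} [SeminormedAddCommGroup E] {f : ℝ → E}
    (hf : Continuous f) (T : ℝ) : ∃ M : ℝ≥0, ∀ s, |s| ≤ T → ‖f s‖ ≤ M := by
  obtain ⟨C, hC⟩ := (isCompact_closedBall (0 : ℝ) T).exists_bound_of_continuousOn hf.continuousOn
  refine ⟨C.toNNReal, fun s hs => (hC s ?_).trans (le_max_left _ _)⟩
  rwa [mem_closedBall_zero_iff, Real.norm_eq_abs]

theorem ODE_solution_unique_of_linear {E : Type*} [NormedAddCommGroup E] [NormedSpace ℝ E]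
    {L : ℝ → E →L[ℝ] E} (hL : Continuous L) {f g : ℝ → E}
    (hf : ∀ t, HasDerivAt f (L t (f t)) t) (hg : ∀ t, HasDerivAt g (L t (g t)) t)
    {t₀ : ℝ} (h : f t₀ = g t₀) : f = g := by
  ext t
  set T := |t| + |t₀| + 1
  obtain ⟨K, hK⟩ := exists_norm_le_of_abs_le hL T
  have ht : |t| < T := by linarith [abs_nonneg t₀]
  have ht₀ : |t₀| < T := by linarith [abs_nonneg t]
  refine ODE_solution_unique_of_mem_Ioo (v := fun s => L s) (s := fun _ => univ)
    (fun s hs => ((L s).lipschitz.weaken (hK s (abs_lt.2 hs).le)).lipschitzOnWith)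
    (abs_lt.1 ht₀) (fun s _ => ⟨hf s, trivial⟩) (fun s _ => ⟨hg s, trivial⟩) h (abs_lt.1 ht)

section DysonSeries

variable {𝔸 : Type*} [NormedRing 𝔸] [NormedAlgebra ℝ 𝔸] {A : ℝ → 𝔸}

noncomputable def dysonTerm (A : ℝ → 𝔸) : ℕ → ℝ → 𝔸
  | 0 => fun _ => 1
  | n + 1 => fun t => ∫ s in (0 : ℝ)..t, A s * dysonTerm A n s

theorem continuous_dysonTerm (hA : Continuous A) (n : ℕ) : Continuous (dysonTerm A n) := by
  induction n with
  | zero => exact continuous_const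
  | succ n ih => exact continuous_primitive (fun a b => (hA.mul ih).intervalIntegrable a b) 0

theorem norm_dysonTerm_le {M T : ℝ} (hM : ∀ s, |s| ≤ T → ‖A s‖ ≤ M) (n : ℕ) {t : ℝ}
    (ht : |t| ≤ T) : ‖dysonTerm A n t‖ ≤ ‖(1 : 𝔸)‖ * ((M * |t|) ^ n / n !) := by
  induction n generalizing t with
  | zero => simp [dysonTerm]
  | succ n ih =>
    have hM0 : 0 ≤ M := (norm_nonneg _).trans (hM t ht)
    have hbound : ∀ s ∈ Ι 0 t,
        ‖A s * dysonTerm A n s‖ ≤ ‖(1 : 𝔸)‖ * (M ^ (n + 1) / n !) * |s - 0| ^ n := by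
      intro s hs
      have hst : |s| ≤ |t| := by
        simpa using abs_sub_left_of_mem_uIcc (uIoc_subset_uIcc hs)
      have hAs := hM s (hst.trans ht)
      calc ‖A s * dysonTerm A n s‖ ≤ ‖A s‖ * ‖dysonTerm A n s‖ := norm_mul_le _ _
        _ ≤ M * (‖(1 : 𝔸)‖ * ((M * |s|) ^ n / n !)) := by gcongr; exact ih (hst.trans ht)
        _ = ‖(1 : 𝔸)‖ * (M ^ (n + 1) / n !) * |s - 0| ^ n := by rw [sub_zero]; ring
    have hcont : Continuous fun s : ℝ => ‖(1 : 𝔸)‖ * (M ^ (n + 1) / n !) * |s - 0| ^ n := by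
      fun_prop
    calc ‖dysonTerm A (n + 1) t‖
        ≤ |∫ s in (0 : ℝ)..t, ‖(1 : 𝔸)‖ * (M ^ (n + 1) / n !) * |s - 0| ^ n| :=
          norm_integral_le_abs_of_norm_le (ae_restrict_of_forall_mem measurableSet_uIoc hbound)
            (hcont.intervalIntegrable 0 t)
      _ = ‖(1 : 𝔸)‖ * ((M * |t|) ^ (n + 1) / (n + 1)!) := by
        rw [intervalIntegral.integral_const_mul, abs_mul, abs_intervalIntegral_eq,
          integral_pow_abs_sub_uIoc, sub_zero, Nat.factorial_succ,
          abs_of_nonneg (by positivity), abs_of_nonneg (by positivity)]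
        push_cast
        field_simp
        ring

variable [CompleteSpace 𝔸]

theorem hasDerivAt_dysonTerm_succ (hA : Continuous A) (n : ℕ) (t : ℝ) :
    HasDerivAt (dysonTerm A (n + 1)) (A t * dysonTerm A n t) t :=
  ((hA.mul (continuous_dysonTerm hA n)).integral_hasStrictDerivAt 0 t).hasDerivAt

theorem exists_hasDerivAt_eq_mul_left (hA : Continuous A) :
    ∃ Φ : ℝ → 𝔸, Φ 0 = 1 ∧ ∀ t, HasDerivAt Φ (A t * Φ t) t := by
  have hsum : ∀ t, Summable fun n => dysonTerm A n t := by
    intro t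
    obtain ⟨M, hM⟩ := exists_norm_le_of_abs_le hA |t|
    exact .of_norm_bounded ((Real.summable_pow_div_factorial _).mul_left _)
      fun n => norm_dysonTerm_le hM n le_rfl
  refine ⟨fun t => ∑' n, dysonTerm A n t, ?_, fun t => ?_⟩
  · show ∑' n, dysonTerm A n 0 = 1
    rw [tsum_eq_single 0 fun n hn => ?_]
    · rfl
    · obtain ⟨n, rfl⟩ := Nat.exists_eq_succ_of_ne_zero hn
      simp [dysonTerm]
  · set T := |t| + 1
    obtain ⟨M, hM⟩ := exists_norm_le_of_abs_le hA T
    have hderiv := hasDerivAt_tsum_of_isPreconnected (g := fun n => dysonTerm A (n + 1))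
      (g' := fun n s => A s * dysonTerm A n s)
      (u := fun n => M * (‖(1 : 𝔸)‖ * ((M * T) ^ n / n !)))
      (((Real.summable_pow_div_factorial _).mul_left _).mul_left _) isOpen_Ioo isPreconnected_Ioo
      (fun n s _ => hasDerivAt_dysonTerm_succ hA n s) ?_ (y₀ := 0) ?_ ?_
      (abs_lt.1 (lt_add_one |t|))
    · rw [(hsum t).tsum_mul_left] at hderiv
      exact (hderiv.const_add 1).congr_of_eventuallyEq
        (Eventually.of_forall fun s => (hsum s).tsum_eq_zero_add)
    · intro n s hs
      have hsT : |s| ≤ T := (abs_lt.2 hs).le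
      calc ‖A s * dysonTerm A n s‖ ≤ ‖A s‖ * ‖dysonTerm A n s‖ := norm_mul_le _ _
        _ ≤ M * (‖(1 : 𝔸)‖ * ((M * |s|) ^ n / n !)) := by
          gcongr
          exacts [hM s hsT, norm_dysonTerm_le hM n hsT]
        _ ≤ M * (‖(1 : 𝔸)‖ * ((M * T) ^ n / n !)) := by gcongr
    · exact abs_lt.1 (by rw [abs_zero]; positivity)
    · exact (summable_nat_add_iff 1).2 (hsum 0)

theorem exists_hasDerivAt_eq_mul_right (hA : Continuous A) :
    ∃ Φ : ℝ → 𝔸, Φ 0 = 1 ∧ ∀ t, HasDerivAt Φ (Φ t * A t) t := by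
  obtain ⟨Φ, hΦ0, hΦ⟩ := exists_hasDerivAt_eq_mul_left (MulOpposite.continuous_op.comp hA)
  refine ⟨fun t => (Φ t).unop, by simp [hΦ0], fun t => ?_⟩
  exact (MulOpposite.opContinuousLinearEquiv ℝ).symm.hasFDerivAt.comp_hasDerivAt t (hΦ t)

end DysonSeries

section Sandwich

variable {𝔸 : Type*} [NormedRing 𝔸] [NormedAlgebra ℝ 𝔸] {P Pt : ℝ → 𝔸}

theorem eq_of_hasDerivAt_mul_sub_mul (hP : Continuous P) (hPt : Continuous Pt) {X Y : ℝ → 𝔸}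
    (hX : ∀ t, HasDerivAt X (X t * P t - Pt t * X t) t)
    (hY : ∀ t, HasDerivAt Y (Y t * P t - Pt t * Y t) t) (h0 : X 0 = Y 0) : X = Y :=
  ODE_solution_unique_of_linear
    (L := fun t => (ContinuousLinearMap.mul ℝ 𝔸).flip (P t) - ContinuousLinearMap.mul ℝ 𝔸 (Pt t))
    (by fun_prop) hX hY h0

theorem isUnit_and_inverse_eq_of_hasDerivAt (hP : Continuous P) {Φ κ : ℝ → 𝔸}
    (hΦ : ∀ t, HasDerivAt Φ (-(P t * Φ t)) t) (hκ : ∀ t, HasDerivAt κ (κ t * P t) t)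
    (hΦ0 : Φ 0 = 1) (hκ0 : κ 0 = 1) (t : ℝ) : IsUnit (Φ t) ∧ Ring.inverse (Φ t) = κ t := by
  have hleft : κ t * Φ t = 1 := by
    have hderiv : ∀ s, HasDerivAt (fun s => κ s * Φ s) 0 s := fun s =>
      ((hκ s).mul (hΦ s)).congr_deriv (by noncomm_ring)
    simpa [hκ0, hΦ0] using is_const_of_deriv_eq_zero (fun s => (hderiv s).differentiableAt)
      (fun s => (hderiv s).deriv) t 0
  have hright : Φ t * κ t = 1 := by
    refine congrFun (eq_of_hasDerivAt_mul_sub_mul hP hP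
      (X := fun s => Φ s * κ s) (Y := fun _ => 1)
      (fun s => ((hΦ s).mul (hκ s)).congr_deriv (by noncomm_ring)) (fun s => ?_)
      (by simp [hΦ0, hκ0])) t
    simpa using hasDerivAt_const s (1 : 𝔸)
  let u : 𝔸ˣ := ⟨Φ t, κ t, hright, hleft⟩
  exact ⟨u.isUnit, Ring.inverse_unit u⟩

theorem eq_mul_mul_of_hasDerivAt (hP : Continuous P) (hPt : Continuous Pt) {X Ψ κ : ℝ → 𝔸}
    (hX : ∀ t, HasDerivAt X (X t * P t - Pt t * X t) t)
    (hΨ : ∀ t, HasDerivAt Ψ (-(Pt t * Ψ t)) t) (hκ : ∀ t, HasDerivAt κ (κ t * P t) t)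
    (hΨ0 : Ψ 0 = 1) (hκ0 : κ 0 = 1) (t : ℝ) : X t = Ψ t * X 0 * κ t :=
  congrFun (eq_of_hasDerivAt_mul_sub_mul hP hPt hX (Y := fun s => Ψ s * X 0 * κ s)
    (fun s => (((hΨ s).mul_const (X 0)).mul (hκ s)).congr_deriv (by noncomm_ring))
    (by simp [hΨ0, hκ0])) t

end Sandwich

/-- Full statement of Proposition 2 / Proposition 5: if `F' = F·P − Pt·F` and
`Q' = Q·P − Pt·Q` with `P, Pt` continuous, then there exist differentiable
unit-valued curves `Φ, Ψ` with `Φ(0) = Ψ(0) = 1`, solving `Φ' = −P·Φ` and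
`Ψ' = −Pt·Ψ`, such that `F(t) = Ψ(t)·F(0)·Φ(t)⁻¹` and
`Q(t) = Ψ(t)·Q(0)·Φ(t)⁻¹` for all `t`. -/
theorem factorized_flow_dressing_representation
    {𝔸 : Type*} [NormedRing 𝔸] [NormedAlgebra ℝ 𝔸] [CompleteSpace 𝔸]
    (P Pt F Q : ℝ → 𝔸) (F' Q' : ℝ → 𝔸)
    (hPc : Continuous P) (hPtc : Continuous Pt)
    (hF : ∀ t : ℝ, HasDerivAt F (F' t) t)
    (hQ : ∀ t : ℝ, HasDerivAt Q (Q' t) t)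
    (hF' : ∀ t : ℝ, F' t = F t * P t - Pt t * F t)
    (hQ' : ∀ t : ℝ, Q' t = Q t * P t - Pt t * Q t) :
    ∃ Φ Ψ : ℝ → 𝔸,
      Φ 0 = 1 ∧ Ψ 0 = 1 ∧
      (∀ t : ℝ, IsUnit (Φ t)) ∧ (∀ t : ℝ, IsUnit (Ψ t)) ∧
      (∀ t : ℝ, HasDerivAt Φ (-(P t * Φ t)) t) ∧
      (∀ t : ℝ, HasDerivAt Ψ (-(Pt t * Ψ t)) t) ∧
      (∀ t : ℝ, F t = Ψ t * F 0 * Ring.inverse (Φ t)) ∧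
      (∀ t : ℝ, Q t = Ψ t * Q 0 * Ring.inverse (Φ t)) := by
  obtain ⟨Φ, hΦ0, hΦ⟩ := exists_hasDerivAt_eq_mul_left hPc.neg
  obtain ⟨Ψ, hΨ0, hΨ⟩ := exists_hasDerivAt_eq_mul_left hPtc.neg
  obtain ⟨κΦ, hκΦ0, hκΦ⟩ := exists_hasDerivAt_eq_mul_right hPc
  obtain ⟨κΨ, hκΨ0, hκΨ⟩ := exists_hasDerivAt_eq_mul_right hPtc
  simp only [Pi.neg_apply, neg_mul] at hΦ hΨ
  have hΦunit := isUnit_and_inverse_eq_of_hasDerivAt hPc hΦ hκΦ hΦ0 hκΦ0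
  have hΨunit := isUnit_and_inverse_eq_of_hasDerivAt hPtc hΨ hκΨ hΨ0 hκΨ0
  refine ⟨Φ, Ψ, hΦ0, hΨ0, fun t => (hΦunit t).1, fun t => (hΨunit t).1, hΦ, hΨ,
    fun t => ?_, fun t => ?_⟩
  · rw [(hΦunit t).2]
    exact eq_mul_mul_of_hasDerivAt hPc hPtc (fun t => hF' t ▸ hF t) hΨ hκΦ hΨ0 hκΦ0 t
  · rw [(hΦunit t).2]
    exact eq_mul_mul_of_hasDerivAt hPc hPtc (fun t => hQ' t ▸ hQ t) hΨ hκΦ hΨ0 hκΦ0 t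
end

section
/- Bäcklund transformation (ce21) preserves the Lax form (the compatibility condition of Section 4 of the paper): Let W be a real Banach space, A : ℝ → L(W,W) a curve of bounded operators, and let f : ℝ → W, f* : ℝ → W* be differentiable with f'(t) = −A(t) f(t) and (f*)'(t) = A(t)* f*(t) for all t. Let l̂ : ℝ → L(W,W) be differentiable with l̂'(t) = l̂(t) ∘ A(t) − A(t) ∘ l̂(t) for all t. Then the transformed curve l(t) := l̂(t) + (w ↦ (f*(t) w) • f(t)) satisfies the same Lax equation l'(t) = l(t) ∘ A(t) − A(t) ∘ l(t) for all t ∈ ℝ. -/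
/-!
The rank-one part `f ⊗ f*` solves the Lax equation on its own: by the product rule its
derivative is `(f*)' ⊗ f + f* ⊗ f' = (f* ∘ A) ⊗ f − f* ⊗ (A f)`, and these two terms are
exactly `(f ⊗ f*) ∘ A` and `A ∘ (f ⊗ f*)`. Since the Lax equation is linear in `l`, adding
this solution to `l̂` gives another one.
-/

open ContinuousLinearMap

section

variable {𝕜 E F G : Type*} [NontriviallyNormedField 𝕜]
  [NormedAddCommGroup E] [NormedSpace 𝕜 E] [NormedAddCommGroup F] [NormedSpace 𝕜 F]
  [NormedAddCommGroup G] [NormedSpace 𝕜 G]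

theorem HasDerivAt.smulRight {g : 𝕜 → E →L[𝕜] 𝕜} {v : 𝕜 → F} {g' : E →L[𝕜] 𝕜} {v' : F}
    {t : 𝕜} (hg : HasDerivAt g g' t) (hv : HasDerivAt v v' t) :
    HasDerivAt (fun s => (g s).smulRight (v s)) ((g t).smulRight v' + g'.smulRight (v t)) t :=
  hasDerivWithinAt_univ.mp <|
    (smulRightL 𝕜 E F).hasDerivWithinAt_of_bilinear hg.hasDerivWithinAt hv.hasDerivWithinAt

theorem ContinuousLinearMap.smulRight_comp (g : E →L[𝕜] 𝕜) (v : F) (B : G →L[𝕜] E) :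
    (g.smulRight v).comp B = (g.comp B).smulRight v :=
  rfl

theorem ContinuousLinearMap.comp_smulRight (B : F →L[𝕜] G) (g : E →L[𝕜] 𝕜) (v : F) :
    B.comp (g.smulRight v) = g.smulRight (B v) := by
  ext w
  simp

theorem ContinuousLinearMap.smulRight_neg (g : E →L[𝕜] 𝕜) (v : F) :
    g.smulRight (-v) = -g.smulRight v := by
  ext w
  simp

theorem HasDerivAt.smulRight_lax {A : 𝕜 → E →L[𝕜] E} {g : 𝕜 → E →L[𝕜] 𝕜} {v : 𝕜 → E}
    {t : 𝕜} (hg : HasDerivAt g ((g t).comp (A t)) t) (hv : HasDerivAt v (-(A t (v t))) t) :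
    HasDerivAt (fun s => (g s).smulRight (v s))
      (((g t).smulRight (v t)).comp (A t) - (A t).comp ((g t).smulRight (v t))) t := by
  refine (hg.smulRight hv).congr_deriv ?_
  rw [smulRight_comp, comp_smulRight, smulRight_neg]
  abel

end

theorem backlund_preserves_lax_general
    {W : Type*} [NormedAddCommGroup W] [NormedSpace ℝ W]
    (A : ℝ → W →L[ℝ] W) (f : ℝ → W) (fstar : ℝ → W →L[ℝ] ℝ)
    (lhat : ℝ → W →L[ℝ] W)
    (hf : ∀ t : ℝ, HasDerivAt f (-(A t (f t))) t)
    (hfstar : ∀ t : ℝ, HasDerivAt fstar ((fstar t).comp (A t)) t)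
    (hlhat : ∀ t : ℝ, HasDerivAt lhat
      ((lhat t).comp (A t) - (A t).comp (lhat t)) t) :
    ∀ t : ℝ, HasDerivAt (fun s : ℝ => lhat s + (fstar s).smulRight (f s))
      ((lhat t + (fstar t).smulRight (f t)).comp (A t)
        - (A t).comp (lhat t + (fstar t).smulRight (f t))) t := by
  intro t
  refine ((hlhat t).add ((hfstar t).smulRight_lax (hf t))).congr_deriv ?_
  rw [add_comp, comp_add]
  abel

/-- The Bäcklund transformation (ce21) preserves the Lax form: if
`f' = −A f`, `(f*)' = A* f* = f* ∘ A` and `l̂' = l̂ ∘ A − A ∘ l̂`, then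
`l := l̂ + f ⊗ f*` (with `(f ⊗ f*) w = (f* w) • f`) satisfies the same Lax
equation `l' = l ∘ A − A ∘ l`. -/
theorem backlund_preserves_lax
    {W : Type*} [NormedAddCommGroup W] [NormedSpace ℝ W] [CompleteSpace W]
    (A : ℝ → W →L[ℝ] W) (f : ℝ → W) (fstar : ℝ → W →L[ℝ] ℝ)
    (lhat : ℝ → W →L[ℝ] W)
    (hf : ∀ t : ℝ, HasDerivAt f (-(A t (f t))) t)
    (hfstar : ∀ t : ℝ, HasDerivAt fstar ((fstar t).comp (A t)) t)
    (hlhat : ∀ t : ℝ, HasDerivAt lhat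
      ((lhat t).comp (A t) - (A t).comp (lhat t)) t) :
    ∀ t : ℝ, HasDerivAt (fun s : ℝ => lhat s + (fstar s).smulRight (f s))
      ((lhat t + (fstar t).smulRight (f t)).comp (A t)
        - (A t).comp (lhat t + (fstar t).smulRight (f t))) t :=
  backlund_preserves_lax_general A f fstar lhat hf hfstar hlhat
end
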